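/- For positive integers p, q, r with p + q + r − 3 even and p − q − r + 1 < 0 (assuming p ≥ q ≥ r), the trapezoidal polynomial [p][q][r] has stable part of length 0, i.e., its coefficients strictly increase up to the middle coefficient and strictly decrease after it. -/

import Mathlib

open Polynomial

/-- `qpoly n = 1 + s + ⋯ + s^(n-1)`, denoted `[n]` in the paper. -/
noncomputable def qpoly (n : ℕ) : Polynomial ℝ :=
  ∑ i ∈ Finset.range n, Polynomial.X ^ i

/-- All coefficients of `p` over its support `0, …, natDegree p` are positive. -/
def PosCoeffs (p : Polynomial ℝ) : Prop :=
  ∀ k ≤ p.natDegree, 0 < p.coeff k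

/-- `p` is symmetric: its coefficient sequence over its support reads the same
forwards and backwards. -/
def SymmetricPoly (p : Polynomial ℝ) : Prop :=
  ∀ k ≤ p.natDegree, p.coeff k = p.coeff (p.natDegree - k)

/-- `p` is trapezoidal: its coefficients strictly increase, then are constant,
then strictly decrease. -/
def Trapezoidal (p : Polynomial ℝ) : Prop :=
  ∃ i j : ℕ, i ≤ j ∧ j ≤ p.natDegree ∧
    (∀ k, k < i → p.coeff k < p.coeff (k + 1)) ∧
    (∀ k, i ≤ k → k < j → p.coeff k = p.coeff (k + 1)) ∧
    (∀ k, j ≤ k → k < p.natDegree → p.coeff (k + 1) < p.coeff k)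

/-- `p` has a run of `l + 1` equal consecutive coefficients within its support. -/
def HasRun (p : Polynomial ℝ) (l : ℕ) : Prop :=
  ∃ k0 : ℕ, k0 + l ≤ p.natDegree ∧ ∀ i ≤ l, p.coeff (k0 + i) = p.coeff k0

/-- The stable part of `p` has length `l`: `l` is the largest integer such that
some `l + 1` consecutive coefficients of `p` are all equal. -/
def StableLength (p : Polynomial ℝ) (l : ℕ) : Prop :=
  HasRun p l ∧ ∀ l', HasRun p l' → l' ≤ l

/-!
Multiplying by `X - 1` telescopes `[p]` into `X ^ p - 1`, so the consecutive differences of the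
coefficients of `[p][q][r]` are `d (k + 1) - d (k + 1 - p)`, where `d m = min (m + 1) q - (m + 1 - r)`
is the coefficient of `[q][r]` (and `d` vanishes at negative indices): a symmetric tent, strictly
rising on `[0, r - 1]`, flat on `[r - 1, q - 1]`, strictly falling afterwards. Below the middle,
`q ≤ p` and `p + 1 < q + r` put `k + 1 - p` strictly on the rising slope and `k + 1` strictly
nearer the centre of the tent, so the difference is positive; above the middle the picture is
mirrored. An even degree means a single middle coefficient, so no two neighbours are equal.
-/

lemma coeff_qpoly (n i : ℕ) : (qpoly n).coeff i = if i < n then 1 else 0 := by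
  simp [qpoly, finsetSum_coeff, coeff_X_pow]

lemma qpoly_ne_zero {n : ℕ} (hn : n ≠ 0) : qpoly n ≠ 0 := fun h => by
  simpa [h, coeff_qpoly, Nat.pos_of_ne_zero hn] using coeff_qpoly n 0

lemma natDegree_qpoly (n : ℕ) : (qpoly n).natDegree = n - 1 := by
  rcases Nat.eq_zero_or_pos n with rfl | hn
  · simp [qpoly]
  refine le_antisymm (natDegree_sum_le_of_forall_le _ _ fun i hi => ?_) (le_natDegree_of_ne_zero ?_)
  · simpa using Nat.le_sub_one_of_lt (Finset.mem_range.mp hi)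
  · simp [coeff_qpoly, hn]

lemma natDegree_qpoly_mul_qpoly_mul {p q r : ℕ} (hp : p ≠ 0) (hq : q ≠ 0) (hr : r ≠ 0) :
    (qpoly p * qpoly q * qpoly r).natDegree = p + q + r - 3 := by
  rw [natDegree_mul (mul_ne_zero (qpoly_ne_zero hp) (qpoly_ne_zero hq)) (qpoly_ne_zero hr),
    natDegree_mul (qpoly_ne_zero hp) (qpoly_ne_zero hq), natDegree_qpoly, natDegree_qpoly,
    natDegree_qpoly]
  omega

lemma coeff_qpoly_mul_qpoly (q r m : ℕ) :
    (qpoly q * qpoly r).coeff m = ((min (m + 1) q - (m + 1 - r) : ℕ) : ℝ) := by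
  rw [coeff_mul, Finset.Nat.sum_antidiagonal_eq_sum_range_succ_mk]
  simp only [coeff_qpoly, mul_ite, mul_one, mul_zero, ← ite_and]
  rw [Finset.sum_boole]
  congr 1
  have : (Finset.range (m + 1)).filter (fun i => m - i < r ∧ i < q)
      = Finset.Ico (m + 1 - r) (min (m + 1) q) := by
    ext i
    simp only [Finset.mem_filter, Finset.mem_range, Finset.mem_Ico]
    omega
  rw [this, Nat.card_Ico]

lemma coeff_qpoly_mul_succ_sub_coeff (p k : ℕ) (f : ℝ[X]) :
    (qpoly p * f).coeff (k + 1) - (qpoly p * f).coeff k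
      = f.coeff (k + 1) - if p ≤ k + 1 then f.coeff (k + 1 - p) else 0 := by
  have h : qpoly p * f * (X - 1) = X ^ p * f - f := by
    rw [mul_right_comm, qpoly, geom_sum_mul]
    ring
  have := congrArg (coeff · (k + 1)) h
  simp only [mul_sub, mul_one, coeff_sub, coeff_mul_X, coeff_X_pow_mul'] at this
  linarith

lemma stableLength_zero_of_coeff_ne_coeff_succ {f : ℝ[X]}
    (h : ∀ k < f.natDegree, f.coeff k ≠ f.coeff (k + 1)) : StableLength f 0 := by
  refine ⟨⟨0, Nat.zero_le _, fun i hi => by rw [Nat.le_zero.mp hi]⟩, fun l ⟨k, hk, hrun⟩ => ?_⟩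
  by_contra! hl
  exact h k (by omega) (hrun 1 hl).symm

lemma coeff_succ_sub_coeff_qpoly_mul_qpoly_mul (p q r k : ℕ) :
    (qpoly p * qpoly q * qpoly r).coeff (k + 1) - (qpoly p * qpoly q * qpoly r).coeff k
      = ((min (k + 2) q - (k + 2 - r) : ℕ) : ℝ)
        - ((if p ≤ k + 1 then min (k + 2 - p) q - (k + 2 - p - r) else 0 : ℕ) : ℝ) := by
  rw [mul_assoc, coeff_qpoly_mul_succ_sub_coeff, coeff_qpoly_mul_qpoly, coeff_qpoly_mul_qpoly,
    Nat.cast_ite, Nat.cast_zero]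
  split_ifs <;> congr 4 <;> omega

lemma coeff_lt_coeff_succ_qpoly_mul_qpoly_mul {p q r k : ℕ} (hqr : r ≤ q) (hpq : q ≤ p)
    (hneg : p + 1 < q + r) (heven : Even (p + q + r - 3)) (hk : 2 * k < p + q + r - 3) :
    (qpoly p * qpoly q * qpoly r).coeff k < (qpoly p * qpoly q * qpoly r).coeff (k + 1) := by
  obtain ⟨t, ht⟩ := heven
  rw [← sub_pos, coeff_succ_sub_coeff_qpoly_mul_qpoly_mul, sub_pos, Nat.cast_lt]
  split_ifs <;> omega

lemma coeff_succ_lt_coeff_qpoly_mul_qpoly_mul {p q r k : ℕ} (hqr : r ≤ q) (hpq : q ≤ p)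
    (hneg : p + 1 < q + r) (hk : p + q + r - 3 ≤ 2 * k) (hk' : k < p + q + r - 3) :
    (qpoly p * qpoly q * qpoly r).coeff (k + 1) < (qpoly p * qpoly q * qpoly r).coeff k := by
  rw [← sub_neg, coeff_succ_sub_coeff_qpoly_mul_qpoly_mul, sub_neg, Nat.cast_lt]
  split_ifs <;> omega

theorem stableLength_zero_qpoly_mul_general (p q r : ℕ) (hqr : r ≤ q) (hpq : q ≤ p)
    (hneg : p + 1 < q + r) (heven : Even (p + q + r - 3)) :
    StableLength (qpoly p * qpoly q * qpoly r) 0 ∧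
      (∀ k : ℕ, 2 * k < p + q + r - 3 →
        (qpoly p * qpoly q * qpoly r).coeff k <
          (qpoly p * qpoly q * qpoly r).coeff (k + 1)) ∧
      (∀ k : ℕ, p + q + r - 3 ≤ 2 * k → k < p + q + r - 3 →
        (qpoly p * qpoly q * qpoly r).coeff (k + 1) <
          (qpoly p * qpoly q * qpoly r).coeff k) := by
  have hinc := fun k => coeff_lt_coeff_succ_qpoly_mul_qpoly_mul (k := k) hqr hpq hneg heven
  have hdec := fun k => coeff_succ_lt_coeff_qpoly_mul_qpoly_mul (k := k) hqr hpq hneg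
  refine ⟨stableLength_zero_of_coeff_ne_coeff_succ fun k hk => ?_, hinc, hdec⟩
  rw [natDegree_qpoly_mul_qpoly_mul (by omega) (by omega) (by omega)] at hk
  rcases lt_or_ge (2 * k) (p + q + r - 3) with hlow | hhigh
  · exact (hinc k hlow).ne
  · exact (hdec k hhigh hk).ne'

theorem stableLength_zero_qpoly_mul (p q r : ℕ) (hr : 1 ≤ r) (hqr : r ≤ q) (hpq : q ≤ p)
    (hneg : p + 1 < q + r) (heven : Even (p + q + r - 3)) :
    StableLength (qpoly p * qpoly q * qpoly r) 0 ∧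
      (∀ k : ℕ, 2 * k < p + q + r - 3 →
        (qpoly p * qpoly q * qpoly r).coeff k <
          (qpoly p * qpoly q * qpoly r).coeff (k + 1)) ∧
      (∀ k : ℕ, p + q + r - 3 ≤ 2 * k → k < p + q + r - 3 →
        (qpoly p * qpoly q * qpoly r).coeff (k + 1) <
          (qpoly p * qpoly q * qpoly r).coeff k) :=
  stableLength_zero_qpoly_mul_general p q r hqr hpq hneg heven
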